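/- arXiv:1403.6769 — 4 statements merged into one kernel-verified Lean document; each statement's English description precedes it below -/
import Mathlib

section
/- For any λ > 0, x ≥ 1 and y ≥ 0, the quantity f_λ(x,y) = ((x-1)^{λ/r}/r) · ∫_0^{min(y/x,1)} u^{λ/r} (y-u)^{-λ/r-1} du satisfies f_λ(x,y) ≤ 1/λ. -/
/-!
Write `p = λ/r`. On `[0, m]` with `m < y`, the integrand `u^p (y-u)^{-p-1}` is dominated by
`u^{p-1}(y-u)^{-p} + u^p(y-u)^{-p-1}`, the derivative of `u^p (y-u)^{-p} / p`, so the integral is at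
most `m^p (y-m)^{-p} / p`. Hence `f_λ(x,y) ≤ ((x-1) m / (y-m))^p / λ`, and `m ≤ y/x` says exactly
that `(x-1) m ≤ y - m`.
-/

open Set Real

section
variable {p y : ℝ}

lemma hasDerivAt_rpow_mul_sub_rpow_neg_div (hp : p ≠ 0) {u : ℝ} (hu : u ≠ 0) (huy : u < y) :
    HasDerivAt (fun v => v ^ p * (y - v) ^ (-p) / p)
      (u ^ (p - 1) * (y - u) ^ (-p) + u ^ p * (y - u) ^ (-p - 1)) u := by
  have hpow : HasDerivAt (fun v => v ^ p) (p * u ^ (p - 1)) u := hasDerivAt_rpow_const (Or.inl hu)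
  have hsub : HasDerivAt (fun v => (y - v) ^ (-p)) (-p * (y - u) ^ (-p - 1) * -1) u :=
    (hasDerivAt_rpow_const (Or.inl (sub_pos.2 huy).ne')).comp u ((hasDerivAt_id u).const_sub y)
  exact ((hpow.mul hsub).div_const p).congr_deriv (by field_simp)

lemma continuousOn_rpow_mul_sub_rpow (hp : 0 ≤ p) (q : ℝ) {m : ℝ} (hmy : m < y) :
    ContinuousOn (fun u => u ^ p * (y - u) ^ q) (Icc 0 m) := by
  refine (continuous_rpow_const hp).continuousOn.mul fun u hu => ?_
  exact ((continuousAt_const.sub continuousAt_id).rpow_const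
    (Or.inl (sub_pos.2 (hu.2.trans_lt hmy)).ne')).continuousWithinAt

theorem integral_rpow_mul_sub_rpow_neg_sub_one_le (hp : 0 < p) {m : ℝ} (hm : 0 ≤ m)
    (hmy : m < y) :
    ∫ u in (0 : ℝ)..m, u ^ p * (y - u) ^ (-p - 1) ≤ m ^ p * (y - m) ^ (-p) / p := by
  have h := intervalIntegral.integral_le_sub_of_hasDeriv_right_of_le hm
    ((continuousOn_rpow_mul_sub_rpow hp.le (-p) hmy).div_const p)
    (fun u hu => (hasDerivAt_rpow_mul_sub_rpow_neg_div hp.ne' hu.1.ne'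
      (hu.2.trans hmy)).hasDerivWithinAt)
    (continuousOn_rpow_mul_sub_rpow hp.le (-p - 1) hmy).integrableOn_Icc
    (fun u hu => le_add_of_nonneg_left (mul_nonneg (rpow_nonneg hu.1.le _)
      (rpow_nonneg (by linarith [hu.2]) _)))
  simpa [zero_rpow hp.ne'] using h

end

theorem stmt_1 (r : ℝ) (hr : 0 < r) (lam : ℝ) (hlam : 0 < lam)
    (x y : ℝ) (hx : 1 ≤ x) (hy : 0 ≤ y) :
    ((x - 1) ^ (lam / r) / r) *
      ∫ u in (0:ℝ)..(min (y / x) 1), u ^ (lam / r) * (y - u) ^ (-(lam / r) - 1) ≤ 1 / lam := by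
  have hp : 0 < lam / r := div_pos hlam hr
  rcases hx.eq_or_lt with rfl | hx1
  · simp only [sub_self, zero_rpow hp.ne', zero_div, zero_mul, one_div, inv_nonneg]
    positivity
  rcases hy.eq_or_lt with rfl | hy0
  · simp only [zero_div, zero_le_one, inf_of_le_left, intervalIntegral.integral_same, mul_zero,
      one_div, inv_nonneg]
    positivity
  set m := min (y / x) 1
  have hm0 : 0 ≤ m := le_min (by positivity) zero_le_one
  have hmx : m * x ≤ y := (le_div_iff₀ (by linarith)).1 (min_le_left _ _)
  have hmy : m < y := (min_le_left _ _).trans_lt (div_lt_self hy0 hx1)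
  calc (x - 1) ^ (lam / r) / r * ∫ u in (0:ℝ)..m, u ^ (lam / r) * (y - u) ^ (-(lam / r) - 1)
      ≤ (x - 1) ^ (lam / r) / r * (m ^ (lam / r) * (y - m) ^ (-(lam / r)) / (lam / r)) :=
        mul_le_mul_of_nonneg_left (integral_rpow_mul_sub_rpow_neg_sub_one_le hp hm0 hmy)
          (by positivity)
    _ = ((x - 1) * m / (y - m)) ^ (lam / r) / lam := by
        rw [div_rpow (by nlinarith) (by linarith), mul_rpow (by linarith) hm0,
          rpow_neg (by linarith)]
        field_simp
    _ ≤ 1 / lam := by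
        gcongr
        exact rpow_le_one (div_nonneg (by nlinarith) (by linarith))
          ((div_le_one (by linarith)).2 (by linarith)) hp.le
end

section
/- For any λ > 0, x > 1 and y ≥ x, f_λ(x,y) ≤ (1/λ)[((x-1)/(y-1))^{λ/r} - ((x-1)/y)^{λ/r}]. -/
/-! Since `y ≥ x` the integral runs over `[0, 1]`, where `u ^ (λ/r) ≤ 1`. Dropping that factor
leaves the elementary integral `∫₀¹ (y - u) ^ (-λ/r - 1) du = ((y-1) ^ (-λ/r) - y ^ (-λ/r)) / (λ/r)`,
and multiplying by `(x - 1) ^ (λ/r) / r` gives exactly the right-hand side. -/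

open Real intervalIntegral Set

theorem integral_rpow_sub_left {c y a b : ℝ} (hc : c ≠ 0) (ha : a < y) (hb : b < y) :
    ∫ u in a..b, (y - u) ^ (-c - 1) = ((y - b) ^ (-c) - (y - a) ^ (-c)) / c := by
  have hpos : 0 ∉ uIcc (y - b) (y - a) := by
    rw [mem_uIcc]; rintro (⟨h, -⟩ | ⟨h, -⟩) <;> linarith
  rw [integral_comp_sub_left (fun t => t ^ (-c - 1)) y,
    integral_rpow (Or.inr ⟨by contrapose! hc; linarith, hpos⟩)]
  rw [show -c - 1 + 1 = -c by ring, div_neg, ← neg_div, neg_sub]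

theorem integral_rpow_mul_rpow_sub_le {c y : ℝ} (hc : 0 ≤ c) (hy : 1 < y) :
    ∫ u in (0:ℝ)..1, u ^ c * (y - u) ^ (-c - 1) ≤ ∫ u in (0:ℝ)..1, (y - u) ^ (-c - 1) := by
  have hcont : ContinuousOn (fun u : ℝ => (y - u) ^ (-c - 1)) (uIcc 0 1) := by
    refine (continuousOn_const.sub continuousOn_id).rpow_const fun u hu => Or.inl ?_
    rw [uIcc_of_le zero_le_one] at hu
    exact sub_ne_zero.mpr (show y ≠ u by linarith [hu.2])
  refine integral_mono_on zero_le_one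
    (((continuous_id.rpow_const fun _ => Or.inr hc).continuousOn.mul hcont).intervalIntegrable)
    hcont.intervalIntegrable fun u ⟨hu0, hu1⟩ => ?_
  exact mul_le_of_le_one_left (rpow_nonneg (by linarith) _) (rpow_le_one hu0 hu1 hc)

theorem rpow_mul_sub_rpow_neg {a b d : ℝ} (c : ℝ) (ha : 0 ≤ a) (hb : 0 ≤ b) (hd : 0 ≤ d) :
    a ^ c * (b ^ (-c) - d ^ (-c)) = (a / b) ^ c - (a / d) ^ c := by
  rw [div_rpow ha hb, div_rpow ha hd, rpow_neg hb, rpow_neg hd, mul_sub, div_eq_mul_inv,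
    div_eq_mul_inv]

theorem stmt_2 (r : ℝ) (hr : 0 < r) (lam : ℝ) (hlam : 0 < lam)
    (x y : ℝ) (hx : 1 < x) (hy : x ≤ y) :
    ((x - 1) ^ (lam / r) / r) *
      ∫ u in (0:ℝ)..(min (y / x) 1), u ^ (lam / r) * (y - u) ^ (-(lam / r) - 1)
      ≤ (1 / lam) * (((x - 1) / (y - 1)) ^ (lam / r) - ((x - 1) / y) ^ (lam / r)) := by
  set c := lam / r
  have hc : 0 < c := div_pos hlam hr
  have hy1 : 1 < y := hx.trans_le hy
  have hlam_eq : lam = c * r := (div_mul_cancel₀ lam hr.ne').symm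
  rw [min_eq_right ((one_le_div (by linarith)).mpr hy)]
  calc (x - 1) ^ c / r * ∫ u in (0:ℝ)..1, u ^ c * (y - u) ^ (-c - 1)
      ≤ (x - 1) ^ c / r * ∫ u in (0:ℝ)..1, (y - u) ^ (-c - 1) :=
        mul_le_mul_of_nonneg_left (integral_rpow_mul_rpow_sub_le hc.le hy1)
          (div_nonneg (rpow_nonneg (by linarith) _) hr.le)
    _ = 1 / lam * ((x - 1) ^ c * ((y - 1) ^ (-c) - y ^ (-c))) := by
        rw [integral_rpow_sub_left hc.ne' (by linarith) (by linarith), sub_zero, hlam_eq]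
        field_simp
    _ = _ := by rw [rpow_mul_sub_rpow_neg c (by linarith) (by linarith) (by linarith)]
end

section
/- For λ_1, λ_2 ∈ [λ_*, λ^*] with λ_* > 0, and for x ≥ 1, y ≥ 0, u ∈ (0, y/x), one has |α_{λ_1}(x)β_{λ_1}(y,u) - α_{λ_2}(x)β_{λ_2}(y,u)| ≤ (2e^{-1}/(r λ_*)) (1/(y-u)) (u(x-1)/(y-u))^{λ_*/(2r)} |λ_1 - λ_2|. -/
/-!
Writing `t = u (x - 1) / (y - u) ∈ [0, 1)`, the product `α_λ(x) β_λ(y, u)` equals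
`t ^ (λ / r) / (r (y - u))`, so the claim is a Lipschitz bound for `λ ↦ t ^ (λ / r)`.
On exponents `a ≥ 2c` the slope `-log t · t ^ a` of `a ↦ t ^ a` is at most
`t ^ c · (-log t · t ^ c) ≤ t ^ c · e⁻¹ / c`, by `s e^{-s} ≤ e⁻¹` with `s = -c log t`.
-/

open Real

namespace Real

lemma neg_log_mul_rpow_le {t c : ℝ} (ht : 0 < t) (hc : 0 < c) :
    -log t * t ^ c ≤ exp (-1) / c := by
  have h := mul_exp_neg_le_exp_neg_one (-c * log t)
  rw [neg_mul, neg_neg, mul_comm c, ← rpow_def_of_pos ht] at h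
  rw [le_div_iff₀ hc]
  linarith

lemma rpow_sub_rpow_le {t a b : ℝ} (ht : 0 < t) :
    t ^ b - t ^ a ≤ t ^ b * (-log t * (a - b)) := by
  have hsplit : t ^ a = t ^ b * t ^ (a - b) := by
    rw [← rpow_add ht, add_sub_cancel]
  have hexp : 1 + log t * (a - b) ≤ t ^ (a - b) := by
    rw [rpow_def_of_pos ht]
    linarith [add_one_le_exp (log t * (a - b))]
  have hb : 0 < t ^ b := rpow_pos_of_pos ht b
  nlinarith

lemma abs_rpow_sub_rpow_le {t a b c : ℝ} (ht0 : 0 ≤ t) (ht1 : t ≤ 1) (hc : 0 < c)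
    (ha : 2 * c ≤ a) (hb : 2 * c ≤ b) :
    |t ^ a - t ^ b| ≤ exp (-1) / c * t ^ c * |a - b| := by
  rcases ht0.eq_or_lt with rfl | ht
  · rw [zero_rpow (by linarith), zero_rpow (by linarith), zero_rpow hc.ne']
    simp
  wlog hba : b ≤ a generalizing a b
  · rw [abs_sub_comm, abs_sub_comm a]
    exact this hb ha (le_of_not_ge hba)
  have hlog : 0 ≤ -log t := neg_nonneg.mpr (log_nonpos ht.le ht1)
  rw [abs_sub_comm, abs_of_nonneg (sub_nonneg.mpr (rpow_le_rpow_of_exponent_ge ht ht1 hba)),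
    abs_of_nonneg (sub_nonneg.mpr hba)]
  calc t ^ b - t ^ a ≤ t ^ b * (-log t * (a - b)) := rpow_sub_rpow_le ht
    _ ≤ t ^ (2 * c) * (-log t * (a - b)) :=
      mul_le_mul_of_nonneg_right (rpow_le_rpow_of_exponent_ge ht ht1 hb)
        (mul_nonneg hlog (sub_nonneg.mpr hba))
    _ = t ^ c * (-log t * t ^ c) * (a - b) := by
      rw [two_mul, rpow_add ht]; ring
    _ ≤ t ^ c * (exp (-1) / c) * (a - b) :=
      mul_le_mul_of_nonneg_right
        (mul_le_mul_of_nonneg_left (neg_log_mul_rpow_le ht hc) (by positivity))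
        (sub_nonneg.mpr hba)
    _ = exp (-1) / c * t ^ c * (a - b) := by ring

end Real

lemma rpow_div_mul_rpow_mul_rpow_neg_sub_one {p q u r : ℝ} (hp : 0 ≤ p) (hq : 0 < q) (hu : 0 ≤ u)
    (a : ℝ) :
    p ^ a / r * (u ^ a * q ^ (-a - 1)) = (u * p / q) ^ a / (r * q) := by
  rw [div_rpow (by positivity) hq.le, mul_rpow hu hp, sub_eq_add_neg, rpow_add hq, rpow_neg hq.le,
    rpow_neg_one]
  have : q ^ a ≠ 0 := (rpow_pos_of_pos hq a).ne'
  field_simp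

theorem stmt_6_general (r lamStar : ℝ) (hr : 0 < r) (hls : 0 < lamStar)
    (lam1 lam2 : ℝ) (h11 : lamStar ≤ lam1)
    (h21 : lamStar ≤ lam2)
    (x y u : ℝ) (hx : 1 ≤ x) (hu0 : 0 < u) (hu : u < y / x) :
    |((x - 1) ^ (lam1 / r) / r) * (u ^ (lam1 / r) * (y - u) ^ (-(lam1 / r) - 1)) -
      ((x - 1) ^ (lam2 / r) / r) * (u ^ (lam2 / r) * (y - u) ^ (-(lam2 / r) - 1))|
      ≤ (2 * Real.exp (-1) / (r * lamStar)) * (1 / (y - u)) *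
          ((u * (x - 1)) / (y - u)) ^ (lamStar / (2 * r)) * |lam1 - lam2| := by
  have hx1 : 0 ≤ x - 1 := by linarith
  have hux : u * x < y := (lt_div_iff₀ (by linarith)).mp hu
  have hyu : 0 < y - u := by nlinarith
  rw [rpow_div_mul_rpow_mul_rpow_neg_sub_one hx1 hyu hu0.le,
    rpow_div_mul_rpow_mul_rpow_neg_sub_one hx1 hyu hu0.le, ← sub_div, abs_div,
    abs_of_pos (by positivity : 0 < r * (y - u))]
  set t := u * (x - 1) / (y - u)
  set c := lamStar / (2 * r)
  have ht1 : t ≤ 1 := (div_le_one hyu).mpr (by nlinarith)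
  have hc : 0 < c := by positivity
  have hexp : ∀ lam, lamStar ≤ lam → 2 * c ≤ lam / r := fun lam h => by
    rw [← mul_div_assoc, mul_div_mul_left _ _ two_ne_zero]; gcongr
  have hlip := abs_rpow_sub_rpow_le (by positivity) ht1 hc (hexp lam1 h11) (hexp lam2 h21)
  rw [← sub_div, abs_div, abs_of_pos hr] at hlip
  calc |t ^ (lam1 / r) - t ^ (lam2 / r)| / (r * (y - u))
      ≤ exp (-1) / c * t ^ c * (|lam1 - lam2| / r) / (r * (y - u)) := by gcongr
    _ = _ := by simp only [c]; field_simp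

theorem stmt_6 (r lamStar lamSup : ℝ) (hr : 0 < r) (hls : 0 < lamStar) (hle : lamStar ≤ lamSup)
    (lam1 lam2 : ℝ) (h11 : lamStar ≤ lam1) (h12 : lam1 ≤ lamSup)
    (h21 : lamStar ≤ lam2) (h22 : lam2 ≤ lamSup)
    (x y u : ℝ) (hx : 1 ≤ x) (hy : 0 ≤ y) (hu0 : 0 < u) (hu : u < y / x) :
    |((x - 1) ^ (lam1 / r) / r) * (u ^ (lam1 / r) * (y - u) ^ (-(lam1 / r) - 1)) -
      ((x - 1) ^ (lam2 / r) / r) * (u ^ (lam2 / r) * (y - u) ^ (-(lam2 / r) - 1))|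
      ≤ (2 * Real.exp (-1) / (r * lamStar)) * (1 / (y - u)) *
          ((u * (x - 1)) / (y - u)) ^ (lamStar / (2 * r)) * |lam1 - lam2| :=
  stmt_6_general r lamStar hr hls lam1 lam2 h11 h21 x y u hx hu0 hu
end

section
/- For λ_1, λ_2 ∈ [λ_*, λ^*] with λ_* > 0, sup over x ≥ 1 and y ≥ 0 of ∫_0^{min(y/x,1)} |α_{λ_1}(x)β_{λ_1}(y,u) - α_{λ_2}(x)β_{λ_2}(y,u)| du is at most (4 e^{-1}/λ_*²) |λ_1 - λ_2|. -/
/-!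
With `t = (x - 1) u / (y - u) ∈ [0, 1]` one has `α_λ(x) β_λ(y, u) = t ^ (λ / r) / (r (y - u))`.
Since `1 - e⁻ᵃ ≤ a` and `t ^ k (-log t) ≤ 1 / (e k)`, the map `p ↦ t ^ p` is Lipschitz on
`[m, ∞)` with constant `(2 / (e m)) t ^ (m / 2)`. The resulting majorant of the integrand is a
constant multiple of the derivative of `u ↦ ((x - 1) u / (y - u)) ^ (m / 2)`, which at the upper
endpoint `u ≤ y / x` is at most `1`.
-/

open Real Set MeasureTheory

lemma Real.rpow_mul_neg_log_le {k t : ℝ} (hk : 0 < k) (ht : 0 < t) :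
    t ^ k * -log t ≤ exp (-1) / k := by
  rw [le_div_iff₀ hk]
  calc t ^ k * -log t * k = k * -log t * exp (-(k * -log t)) := by
        rw [rpow_def_of_pos ht]; ring_nf
    _ ≤ exp (-1) := mul_exp_neg_le_exp_neg_one _

lemma Real.rpow_sub_rpow_le_s7 {t : ℝ} (ht : 0 < t) (p q : ℝ) :
    t ^ p - t ^ q ≤ (q - p) * (t ^ p * -log t) := by
  have hexp := add_one_le_exp (log t * (q - p))
  have hq : t ^ q = t ^ p * exp (log t * (q - p)) := by
    rw [← rpow_def_of_pos ht, ← rpow_add ht]; ring_nf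
  rw [hq]
  nlinarith [rpow_pos_of_pos ht p]

lemma Real.abs_rpow_sub_rpow_le_s7 {m p q t : ℝ} (hm : 0 < m) (hp : m ≤ p) (hq : m ≤ q)
    (ht0 : 0 ≤ t) (ht1 : t ≤ 1) :
    |t ^ p - t ^ q| ≤ 2 * exp (-1) / m * |p - q| * t ^ (m / 2) := by
  wlog hpq : p ≤ q generalizing p q
  · rw [abs_sub_comm, abs_sub_comm p]
    exact this hq hp (le_of_not_ge hpq)
  rcases ht0.eq_or_lt with rfl | ht
  · simp [zero_rpow (hm.trans_le hp).ne', zero_rpow (hm.trans_le hq).ne',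
      zero_rpow (half_pos hm).ne']
  have hlog : 0 ≤ -log t := neg_nonneg.mpr (log_nonpos ht.le ht1)
  have hhalf : t ^ m = t ^ (m / 2) * t ^ (m / 2) := by rw [← rpow_add ht]; ring_nf
  rw [abs_of_nonneg (sub_nonneg.mpr (rpow_le_rpow_of_exponent_ge ht ht1 hpq)),
    abs_sub_comm, abs_of_nonneg (sub_nonneg.mpr hpq)]
  calc t ^ p - t ^ q ≤ (q - p) * (t ^ p * -log t) := rpow_sub_rpow_le_s7 ht p q
    _ ≤ (q - p) * (t ^ m * -log t) := by
        have := rpow_le_rpow_of_exponent_ge ht ht1 hp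
        gcongr
    _ = (q - p) * t ^ (m / 2) * (t ^ (m / 2) * -log t) := by rw [hhalf]; ring
    _ ≤ (q - p) * t ^ (m / 2) * (exp (-1) / (m / 2)) := by
        have := rpow_mul_neg_log_le (half_pos hm) ht
        have := sub_nonneg.mpr hpq
        gcongr
    _ = 2 * exp (-1) / m * (q - p) * t ^ (m / 2) := by field_simp

lemma hasDerivAt_div_sub_rpow {u y : ℝ} (hu : 0 < u) (huy : u < y) (c : ℝ) :
    HasDerivAt (fun u => (u / (y - u)) ^ c)
      (c * (u / (y - u)) ^ (c - 1) * (y / (y - u) ^ 2)) u := by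
  have hyu : y - u ≠ 0 := (sub_pos.mpr huy).ne'
  have hs : HasDerivAt (fun u => u / (y - u)) (y / (y - u) ^ 2) u :=
    ((hasDerivAt_id' u).div ((hasDerivAt_id' u).const_sub y) hyu).congr_deriv (by ring)
  exact (hs.rpow_const (p := c) (Or.inl (div_pos hu (sub_pos.mpr huy)).ne')).congr_deriv
    (by ring)

/-- `α_λ(x) β_λ(y, u)` with the exponent `p = λ / r`. -/
noncomputable def kernel (r p x y u : ℝ) : ℝ :=
  (x - 1) ^ p / r * (u ^ p * (y - u) ^ (-p - 1))

lemma kernel_eq {r x y u : ℝ} (hx : 1 ≤ x) (hu : 0 ≤ u) (huy : u < y) (p : ℝ) :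
    kernel r p x y u = ((x - 1) * (u / (y - u))) ^ p / (r * (y - u)) := by
  have hv : 0 < y - u := sub_pos.mpr huy
  rw [kernel, div_mul_eq_mul_div, mul_rpow (sub_nonneg.mpr hx) (div_nonneg hu hv.le),
    div_rpow hu hv.le, sub_eq_add_neg (-p), rpow_add hv, rpow_neg hv.le, rpow_neg_one]
  field_simp

lemma continuousOn_kernel {r p x y T : ℝ} (hp : 0 ≤ p) (hTy : T < y) :
    ContinuousOn (kernel r p x y) (Icc 0 T) :=
  continuousOn_const.mul ((continuousOn_id.rpow_const fun _ _ => Or.inr hp).mul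
    ((continuousOn_const.sub continuousOn_id).rpow_const
      fun _ hu => Or.inl (sub_pos.mpr (hu.2.trans_lt hTy)).ne'))

lemma abs_kernel_sub_kernel_le {r m A B x y u : ℝ} (hr : 0 < r) (hm : 0 < m) (hA : m ≤ A)
    (hB : m ≤ B) (hx : 1 ≤ x) (hu : 0 < u) (huy : u < y) (hxu : x * u ≤ y) :
    |kernel r A x y u - kernel r B x y u| ≤
      4 * exp (-1) / (m ^ 2 * r) * |A - B| * (x - 1) ^ (m / 2) *
        (m / 2 * (u / (y - u)) ^ (m / 2 - 1) * (y / (y - u) ^ 2)) := by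
  have hv : 0 < y - u := sub_pos.mpr huy
  have hx1 : 0 ≤ x - 1 := sub_nonneg.mpr hx
  have hs : 0 < u / (y - u) := div_pos hu hv
  set s := u / (y - u)
  have ht1 : (x - 1) * s ≤ 1 := by
    rw [← mul_div_assoc, div_le_one hv]; linarith
  have hsy : s / (y - u) ≤ y / (y - u) ^ 2 := by
    rw [sq, ← div_div]
    exact div_le_div_of_nonneg_right (div_le_div_of_nonneg_right huy.le hv.le) hv.le
  rw [kernel_eq hx hu.le huy, kernel_eq hx hu.le huy, ← sub_div, abs_div,
    abs_of_pos (mul_pos hr hv)]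
  calc |((x - 1) * s) ^ A - ((x - 1) * s) ^ B| / (r * (y - u))
      ≤ 2 * exp (-1) / m * |A - B| * ((x - 1) * s) ^ (m / 2) / (r * (y - u)) := by
        gcongr
        exact abs_rpow_sub_rpow_le_s7 hm hA hB (mul_nonneg hx1 hs.le) ht1
    _ = 4 * exp (-1) / (m ^ 2 * r) * |A - B| * (x - 1) ^ (m / 2) *
        (m / 2 * s ^ (m / 2 - 1) * (s / (y - u))) := by
        rw [mul_rpow hx1 hs.le, rpow_sub_one hs.ne']
        field_simp
        ring
    _ ≤ _ := by gcongr

lemma integral_abs_kernel_sub_kernel_le {r m A B x y T : ℝ} (hr : 0 < r) (hm : 0 < m)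
    (hA : m ≤ A) (hB : m ≤ B) (hx : 1 ≤ x) (hT0 : 0 ≤ T) (hTy : T < y) (hxT : x * T ≤ y) :
    ∫ u in (0 : ℝ)..T, |kernel r A x y u - kernel r B x y u| ≤
      4 * exp (-1) / (m ^ 2 * r) * |A - B| := by
  set C := 4 * exp (-1) / (m ^ 2 * r) * |A - B|
  have hyT : 0 < y - T := sub_pos.mpr hTy
  have hs : ContinuousOn (fun u => (u / (y - u)) ^ (m / 2)) (Icc 0 T) :=
    (continuousOn_id.div (continuousOn_const.sub continuousOn_id)
      fun _ hu => (sub_pos.mpr (hu.2.trans_lt hTy)).ne').rpow_const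
      fun _ _ => Or.inr (half_pos hm).le
  have hint : IntegrableOn (fun u => |kernel r A x y u - kernel r B x y u|) (Icc 0 T) :=
    ((continuousOn_kernel (hm.trans_le hA).le hTy).sub
      (continuousOn_kernel (hm.trans_le hB).le hTy)).abs.integrableOn_Icc
  calc _ ≤ C * (x - 1) ^ (m / 2) * (T / (y - T)) ^ (m / 2) -
        C * (x - 1) ^ (m / 2) * (0 / (y - 0)) ^ (m / 2) := by
        refine intervalIntegral.integral_le_sub_of_hasDeriv_right_of_le hT0
          (continuousOn_const.mul hs)
          (fun u hu => ((hasDerivAt_div_sub_rpow hu.1 (hu.2.trans hTy) _).const_mul _)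
            |>.hasDerivWithinAt)
          hint (fun u hu => abs_kernel_sub_kernel_le hr hm hA hB hx hu.1 (hu.2.trans hTy) ?_)
        nlinarith [hu.2]
    _ = C * ((x - 1) * (T / (y - T))) ^ (m / 2) := by
        rw [zero_div, zero_rpow (half_pos hm).ne',
          mul_rpow (sub_nonneg.mpr hx) (div_nonneg hT0 hyT.le)]
        ring
    _ ≤ C := by
        refine mul_le_of_le_one_right (by positivity) (rpow_le_one ?_ ?_ (half_pos hm).le)
        · exact mul_nonneg (sub_nonneg.mpr hx) (div_nonneg hT0 hyT.le)
        · rw [← mul_div_assoc, div_le_one hyT]; linarith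

theorem stmt_7_general (r lamStar : ℝ) (hr : 0 < r) (hls : 0 < lamStar)
    (lam1 lam2 : ℝ) (h11 : lamStar ≤ lam1) (h21 : lamStar ≤ lam2)
    (x y : ℝ) (hx : 1 ≤ x) (hy : 0 ≤ y) :
    (∫ u in (0:ℝ)..(min (y / x) 1),
        |((x - 1) ^ (lam1 / r) / r) * (u ^ (lam1 / r) * (y - u) ^ (-(lam1 / r) - 1)) -
          ((x - 1) ^ (lam2 / r) / r) * (u ^ (lam2 / r) * (y - u) ^ (-(lam2 / r) - 1))|)
      ≤ (4 * Real.exp (-1) / lamStar ^ 2) * |lam1 - lam2| := by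
  have hA : 0 < lam1 / r := div_pos (hls.trans_le h11) hr
  have hB : 0 < lam2 / r := div_pos (hls.trans_le h21) hr
  rcases hx.eq_or_lt with rfl | hx
  · simp only [sub_self, zero_rpow hA.ne', zero_rpow hB.ne', zero_div, zero_mul, abs_zero,
      intervalIntegral.integral_zero]
    positivity
  rcases hy.eq_or_lt with rfl | hy
  · rw [zero_div, min_eq_left zero_le_one, intervalIntegral.integral_same]
    positivity
  have hconst : 4 * exp (-1) / ((lamStar / r) ^ 2 * r) * |lam1 / r - lam2 / r| =
      4 * exp (-1) / lamStar ^ 2 * |lam1 - lam2| := by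
    rw [← sub_div, abs_div, abs_of_pos hr]
    field_simp
  have hT : min (y / x) 1 ≤ y / x := min_le_left _ _
  rw [← hconst]
  refine integral_abs_kernel_sub_kernel_le hr (div_pos hls hr) (by gcongr) (by gcongr) hx.le
    (le_min (by positivity) zero_le_one) (hT.trans_lt (div_lt_self hy hx)) ?_
  calc x * min (y / x) 1 ≤ x * (y / x) := by gcongr
    _ = y := mul_div_cancel₀ y (by positivity)

theorem stmt_7 (r lamStar lamSup : ℝ) (hr : 0 < r) (hls : 0 < lamStar) (hle : lamStar ≤ lamSup)
    (lam1 lam2 : ℝ) (h11 : lamStar ≤ lam1) (h12 : lam1 ≤ lamSup)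
    (h21 : lamStar ≤ lam2) (h22 : lam2 ≤ lamSup)
    (x y : ℝ) (hx : 1 ≤ x) (hy : 0 ≤ y) :
    (∫ u in (0:ℝ)..(min (y / x) 1),
        |((x - 1) ^ (lam1 / r) / r) * (u ^ (lam1 / r) * (y - u) ^ (-(lam1 / r) - 1)) -
          ((x - 1) ^ (lam2 / r) / r) * (u ^ (lam2 / r) * (y - u) ^ (-(lam2 / r) - 1))|)
      ≤ (4 * Real.exp (-1) / lamStar ^ 2) * |lam1 - lam2| :=
  stmt_7_general r lamStar hr hls lam1 lam2 h11 h21 x y hx hy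
end
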